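/- arXiv:1712.07533 — 2 statements merged into one kernel-verified Lean document; each statement's English description precedes it below -/
import Mathlib

section
/- Let Λ be the (l+1)×(l+1) Jordan block of eigenvalue λ with 0 < |λ| < 1, S a set with bijection R : S → S, h : S → ℂ^{l+1} with ‖h ∘ R − Λ^{−1} h‖ bounded, and ĥ the unique function with ĥ ∘ R = Λ^{−1} ĥ and ĥ − h bounded. Then for every x ∈ S, the sequence (h(R^{−n}(x)))_{n ≥ 0} is bounded; i.e., the values of h along the forward orbit of x under R^{−1} stay in a bounded set (with bound independent of x up to the uniform constant). -/
/-!
Since `R ∘ R⁻¹ = id`, the functional equation of `ĥ` reads `ĥ ∘ R⁻¹ = Λ ĥ`, so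
`ĥ (R⁻ⁿ x) = Λⁿ ĥ x`. The Jordan block `Λ` is lower triangular with spectrum `{λ}`, so its
spectral radius is `|λ| < 1` and Gelfand's formula bounds the powers `Λⁿ`. Finally `h` stays
within a uniform distance of `ĥ`.
-/

/-- The `(l+1)×(l+1)` lower-triangular Jordan block with `lam` on the diagonal
and `1` on the subdiagonal. -/
def jordanBlock (l : ℕ) (lam : ℂ) : Matrix (Fin (l + 1)) (Fin (l + 1)) ℂ :=
  fun i j => if (i : ℕ) = (j : ℕ) then lam else if (i : ℕ) = (j : ℕ) + 1 then 1 else 0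

open Matrix Filter

theorem Matrix.IsLowerTriangular.spectrum_subset_range_diag {n K : Type*} [Fintype n]
    [DecidableEq n] [LinearOrder n] [Field K] {M : Matrix n n K} (hM : M.IsLowerTriangular) :
    spectrum K M ⊆ Set.range M.diag := by
  intro t ht
  by_contra hdiag
  rw [spectrum.mem_iff] at ht
  refine ht ?_
  rw [isUnit_iff_isUnit_det,
    det_of_isLowerTriangular _ ((blockTriangular_algebraMap t).sub hM), isUnit_iff_ne_zero,
    Finset.prod_ne_zero_iff]
  intro i _ hi
  refine hdiag ⟨i, ?_⟩
  simp only [sub_apply, algebraMap_matrix_apply, Algebra.algebraMap_self,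
    RingHom.id_apply] at hi
  exact (sub_eq_zero.mp hi).symm

theorem bddAbove_norm_pow_of_spectralRadius_lt_one {A : Type*} [NormedRing A]
    [NormedAlgebra ℂ A] [CompleteSpace A] {a : A} (ha : spectralRadius ℂ a < 1) :
    BddAbove (Set.range fun n : ℕ => ‖a ^ n‖) := by
  have hroot : ∀ᶠ n : ℕ in atTop, ENNReal.ofReal (‖a ^ n‖ ^ (1 / n : ℝ)) < 1 :=
    (spectrum.pow_norm_pow_one_div_tendsto_nhds_spectralRadius a).eventually_lt_const ha
  refine IsBoundedUnder.bddAbove_range (isBoundedUnder_of_eventually_le (a := 1) ?_)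
  filter_upwards [hroot, eventually_ge_atTop 1] with n hn hn1
  by_contra! h
  rw [ENNReal.ofReal_lt_one] at hn
  exact hn.not_ge (Real.one_le_rpow h.le (by positivity))

theorem Matrix.apply_iterate_eq_pow_mulVec {S m R : Type*} [Fintype m] [DecidableEq m]
    [Semiring R] {f : S → m → R} {T : S → S} {A : Matrix m m R}
    (hf : ∀ y, f (T y) = A *ᵥ f y) (n : ℕ) (y : S) : f (T^[n] y) = (A ^ n) *ᵥ f y := by
  induction n with
  | zero => simp
  | succ n ih => rw [Function.iterate_succ_apply', hf, ih, mulVec_mulVec, ← pow_succ']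

theorem Matrix.apply_rightInverse_eq_mulVec {S m K : Type*} [Fintype m] [DecidableEq m]
    [CommRing K] {f : S → m → K} {R T : S → S} {A : Matrix m m K} (hA : IsUnit A.det)
    (hf : ∀ y, f (R y) = A⁻¹ *ᵥ f y) (hRT : Function.RightInverse T R) (y : S) :
    f (T y) = A *ᵥ f y := by
  conv_rhs => rw [← hRT y, hf, mulVec_mulVec, mul_nonsing_inv _ hA, one_mulVec]

section JordanBlock

variable (l : ℕ) (lam : ℂ)

theorem jordanBlock_isLowerTriangular : (jordanBlock l lam).IsLowerTriangular := by
  intro i j hij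
  have : (i : ℕ) < j := hij
  simp only [jordanBlock]
  rw [if_neg (by omega), if_neg (by omega)]

theorem det_jordanBlock : (jordanBlock l lam).det = lam ^ (l + 1) := by
  rw [det_of_isLowerTriangular _ (jordanBlock_isLowerTriangular l lam)]
  simp [jordanBlock]

theorem spectrum_jordanBlock_subset : spectrum ℂ (jordanBlock l lam) ⊆ {lam} := by
  intro t ht
  obtain ⟨i, rfl⟩ := (jordanBlock_isLowerTriangular l lam).spectrum_subset_range_diag ht
  simp [jordanBlock]

attribute [local instance] Matrix.linftyOpNormedRing Matrix.linftyOpNormedAlgebra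

variable {l lam}

theorem exists_norm_jordanBlock_pow_mulVec_le (h1 : ‖lam‖ < 1) :
    ∃ M : ℝ, ∀ (n : ℕ) (v : Fin (l + 1) → ℂ), ‖(jordanBlock l lam ^ n) *ᵥ v‖ ≤ M * ‖v‖ := by
  have hρ : spectralRadius ℂ (jordanBlock l lam) < 1 := by
    have hlam : (‖lam‖₊ : ENNReal) < 1 := by exact_mod_cast h1
    refine lt_of_le_of_lt (iSup₂_le fun t ht => ?_) hlam
    rw [spectrum_jordanBlock_subset l lam ht]
  obtain ⟨M, hM⟩ := bddAbove_norm_pow_of_spectralRadius_lt_one hρ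
  refine ⟨M, fun n v => (linfty_opNorm_mulVec _ v).trans ?_⟩
  gcongr
  exact hM ⟨n, rfl⟩

end JordanBlock

theorem height_bounded_on_orbit_general (l : ℕ) (lam : ℂ)
    (h0 : 0 < ‖lam‖) (h1 : ‖lam‖ < 1)
    {S : Type*} (R Rinv : S → S)
    (hRinv : ∀ x : S, R (Rinv x) = x ∧ Rinv (R x) = x)
    (h : S → Fin (l + 1) → ℂ)
    (hhat : S → Fin (l + 1) → ℂ)
    (hfe : ∀ x : S, hhat (R x) = ((jordanBlock l lam)⁻¹).mulVec (hhat x))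
    (hnorm : ∃ C : ℝ, ∀ x : S, ‖hhat x - h x‖ ≤ C) :
    ∀ x : S, ∃ C : ℝ, ∀ n : ℕ, ‖h (Rinv^[n] x)‖ ≤ C := by
  intro x
  obtain ⟨C, hC⟩ := hnorm
  obtain ⟨M, hM⟩ := exists_norm_jordanBlock_pow_mulVec_le (l := l) h1
  have hdet : IsUnit (jordanBlock l lam).det := by
    rw [det_jordanBlock]
    exact (norm_pos_iff.mp h0).isUnit.pow _
  have horbit (n : ℕ) : hhat (Rinv^[n] x) = (jordanBlock l lam ^ n) *ᵥ hhat x :=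
    apply_iterate_eq_pow_mulVec
      (apply_rightInverse_eq_mulVec hdet hfe fun y => (hRinv y).1) n x
  refine ⟨M * ‖hhat x‖ + C, fun n => ?_⟩
  calc ‖h (Rinv^[n] x)‖
      ≤ ‖hhat (Rinv^[n] x)‖ + ‖hhat (Rinv^[n] x) - h (Rinv^[n] x)‖ := norm_le_norm_add_norm_sub _ _
    _ ≤ M * ‖hhat x‖ + C := add_le_add (horbit n ▸ hM n _) (hC _)

/-- Boundedness of `h` along forward orbits of `R⁻¹` for contracting Jordan blocks. -/
theorem height_bounded_on_orbit (l : ℕ) (lam : ℂ)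
    (h0 : 0 < ‖lam‖) (h1 : ‖lam‖ < 1)
    {S : Type*} (R Rinv : S → S)
    (hRinv : ∀ x : S, R (Rinv x) = x ∧ Rinv (R x) = x)
    (h : S → Fin (l + 1) → ℂ)
    (hbdd : ∃ C : ℝ, ∀ x : S, ‖h (R x) - ((jordanBlock l lam)⁻¹).mulVec (h x)‖ ≤ C)
    (hhat : S → Fin (l + 1) → ℂ)
    (hfe : ∀ x : S, hhat (R x) = ((jordanBlock l lam)⁻¹).mulVec (hhat x))
    (hnorm : ∃ C : ℝ, ∀ x : S, ‖hhat x - h x‖ ≤ C) :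
    ∀ x : S, ∃ C : ℝ, ∀ n : ℕ, ‖h (Rinv^[n] x)‖ ≤ C :=
  height_bounded_on_orbit_general l lam h0 h1 R Rinv hRinv h hhat hfe hnorm
end

section
/- Let λ ∈ ℂ with |λ| > 1, Λ the (l+1)×(l+1) Jordan block of eigenvalue λ, and suppose (c_n)_{n≥0} is a sequence of vectors in ℂ^{l+1} satisfying c_{n+1} = Λ c_n + e_n where ‖e_n‖ ≤ C for all n. If c_0 ≠ 0 is such that the 'canonical limit' v := lim_{n→∞} Λ^{−n} c_n is nonzero, then lim_{n→∞} ‖c_n‖^{1/n} = |λ|. Moreover, the limit v = lim_{n→∞} Λ^{−n} c_n always exists. -/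
/-!
Write `Λ = λ + N` with `N` nilpotent. Then `Λ⁻¹ - λ⁻¹ = -λ⁻¹ Λ⁻¹ N` is nilpotent too, and the
binomial theorem bounds `‖Λⁿ‖` and `‖Λ⁻ⁿ‖` by polynomials in `n` times `|λ|ⁿ` and `|λ|⁻ⁿ`.
Hence the increments `Λ⁻⁽ⁿ⁺¹⁾ eₙ` of `xₙ = Λ⁻ⁿ cₙ` are summable and `xₙ → v`. If `v ≠ 0`, then
`xₙ` is bounded and eventually bounded away from `0`, so `cₙ = Λⁿ xₙ` and `xₙ = Λ⁻ⁿ cₙ` pin `‖cₙ‖`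
between `|λ|ⁿ` divided and multiplied by polynomials in `n`, whose `n`-th roots tend to `1`.
-/

open Matrix Filter Asymptotics Finset Topology

attribute [local instance] Matrix.linftyOpNormedRing Matrix.linftyOpNormedAlgebra

open Polynomial in
theorem Matrix.IsLowerTriangular.isNilpotent {n R : Type*} [Fintype n] [LinearOrder n]
    [DecidableEq n] [CommRing R] {M : Matrix n n R} (hM : M.IsLowerTriangular)
    (hdiag : ∀ i, M i i = 0) : IsNilpotent M := by
  have hχ : M.charpoly = X ^ Fintype.card n := by
    rw [charpoly, det_of_isLowerTriangular _ hM.charmatrix]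
    simp [charmatrix_apply_eq, hdiag]
  exact ⟨Fintype.card n, by simpa [hχ] using aeval_self_charpoly M⟩

theorem jordanBlock_eq_algebraMap_add (l : ℕ) (lam : ℂ) :
    jordanBlock l lam = algebraMap ℂ _ lam + jordanBlock l 0 := by
  ext i j
  simp only [jordanBlock, Matrix.add_apply, algebraMap_matrix_apply, Fin.ext_iff]
  split_ifs <;> simp_all

theorem isNilpotent_jordanBlock_zero (l : ℕ) : IsNilpotent (jordanBlock l 0) := by
  refine IsLowerTriangular.isNilpotent (fun i j hij => ?_) fun i => by simp [jordanBlock]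
  have : (i : ℕ) < j := OrderDual.toDual_lt_toDual.mp hij
  simp only [jordanBlock]
  rw [if_neg (by omega), if_neg (by omega)]

section Algebra

variable {𝕜 R : Type*} [Field 𝕜] [Ring R] [Algebra 𝕜 R]

theorem isUnit_of_isNilpotent_sub_algebraMap {A : R} {μ : 𝕜} (hμ : μ ≠ 0)
    (hA : IsNilpotent (A - algebraMap 𝕜 R μ)) : IsUnit A := by
  simpa using hA.isUnit_add_left_of_commute (hμ.isUnit.map (algebraMap 𝕜 R))
    (Algebra.commutes μ _).symm

theorem isNilpotent_inv_sub_algebraMap {u : Rˣ} {μ : 𝕜} (hμ : μ ≠ 0)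
    (hu : IsNilpotent ((u : R) - algebraMap 𝕜 R μ)) :
    IsNilpotent ((↑u⁻¹ : R) - algebraMap 𝕜 R μ⁻¹) := by
  have hfactor : (↑u⁻¹ : R) - algebraMap 𝕜 R μ⁻¹ =
      -(algebraMap 𝕜 R μ⁻¹ * ↑u⁻¹) * ((u : R) - algebraMap 𝕜 R μ) := by
    rw [neg_mul, mul_sub, mul_assoc, Units.inv_mul, mul_one, mul_assoc,
      ← Algebra.commutes, ← mul_assoc, ← map_mul, inv_mul_cancel₀ hμ, map_one, one_mul, neg_sub]
  rw [hfactor]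
  refine Commute.isNilpotent_mul_left ?_ hu
  have hu_comm : Commute (↑u⁻¹ : R) ((u : R) - algebraMap 𝕜 R μ) :=
    (Commute.refl (u : R)).units_inv_left.sub_right (Algebra.commute_algebraMap_right _ _)
  exact ((Algebra.commute_algebraMap_left _ _).mul_left hu_comm).neg_left

theorem one_add_pow_eq_sum_of_pow_eq_zero {Q : R} {m : ℕ} (hQ : Q ^ m = 0) (n : ℕ) :
    (1 + Q) ^ n = ∑ j ∈ range m, n.choose j • Q ^ j := by
  have hvanish : ∀ j, m ≤ j → n.choose j • Q ^ j = 0 := fun j hj => by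
    rw [← Nat.add_sub_cancel' hj, pow_add, hQ, zero_mul, smul_zero]
  calc (1 + Q) ^ n = ∑ j ∈ range (n + 1), n.choose j • Q ^ j := by
        rw [add_comm, (Commute.one_right Q).add_pow]
        simp only [one_pow, mul_one, ← nsmul_eq_mul']
    _ = ∑ j ∈ range (n + 1 + m), n.choose j • Q ^ j :=
        sum_subset (range_subset_range.mpr (by omega)) fun j _ hj => by
          rw [Nat.choose_eq_zero_of_lt (by simpa using hj), zero_smul]
    _ = ∑ j ∈ range m, n.choose j • Q ^ j :=
        (sum_subset (range_subset_range.mpr (by omega)) fun j _ hj =>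
          hvanish j (by simpa using hj)).symm

end Algebra

section Normed

variable {𝕜 R : Type*} [NormedField 𝕜] [NormedRing R] [NormedAlgebra 𝕜 R]

theorem isBigO_pow_of_isNilpotent_sub_algebraMap {A : R} {μ : 𝕜} (hμ : μ ≠ 0)
    (hA : IsNilpotent (A - algebraMap 𝕜 R μ)) :
    ∃ k : ℕ, (fun n : ℕ => A ^ n) =O[atTop] fun n => (n : ℝ) ^ k * ‖μ‖ ^ n := by
  obtain ⟨m, hm⟩ := hA
  set Q := μ⁻¹ • (A - algebraMap 𝕜 R μ)
  have hQ : Q ^ m = 0 := by rw [smul_pow, hm, smul_zero]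
  have hAQ : A = μ • (1 + Q) := by
    rw [smul_add, smul_smul, mul_inv_cancel₀ hμ, one_smul, Algebra.smul_def, mul_one,
      add_sub_cancel]
  refine ⟨m, IsBigO.of_bound (∑ j ∈ range m, ‖Q ^ j‖) ?_⟩
  filter_upwards [eventually_ge_atTop 1] with n hn
  have hchoose : ∀ j ∈ range m, (n.choose j : ℝ) ≤ (n : ℝ) ^ m := fun j hj => by
    calc (n.choose j : ℝ) ≤ (n : ℝ) ^ j := mod_cast Nat.choose_le_pow n j
      _ ≤ (n : ℝ) ^ m :=
        pow_le_pow_right₀ (by exact_mod_cast hn) (mem_range.mp hj).le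
  rw [hAQ, smul_pow, norm_smul, norm_pow, one_add_pow_eq_sum_of_pow_eq_zero hQ, norm_mul,
    norm_pow, norm_pow, Real.norm_natCast, norm_norm]
  calc ‖μ‖ ^ n * ‖∑ j ∈ range m, n.choose j • Q ^ j‖
      ≤ ‖μ‖ ^ n * ∑ j ∈ range m, (n.choose j : ℝ) * ‖Q ^ j‖ := by
        gcongr
        exact (norm_sum_le _ _).trans (sum_le_sum fun j _ => norm_nsmul_le)
    _ ≤ ‖μ‖ ^ n * ∑ j ∈ range m, (n : ℝ) ^ m * ‖Q ^ j‖ := by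
        gcongr with j hj
        exact hchoose j hj
    _ = (∑ j ∈ range m, ‖Q ^ j‖) * ((n : ℝ) ^ m * ‖μ‖ ^ n) := by
        rw [← mul_sum]; ring

end Normed

theorem tendsto_mul_natCast_pow_rpow_inv {b : ℝ} (hb : 0 < b) (k : ℕ) :
    Tendsto (fun n : ℕ => (b * (n : ℝ) ^ k) ^ (n : ℝ)⁻¹) atTop (𝓝 1) := by
  have hconst : Tendsto (fun n : ℕ => b ^ (n : ℝ)⁻¹) atTop (𝓝 1) := by
    simpa using tendsto_const_nhds.rpow (tendsto_inv_atTop_nhds_zero_nat (𝕜 := ℝ)) (Or.inl hb.ne')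
  have hroot : Tendsto (fun n : ℕ => (n : ℝ) ^ (n : ℝ)⁻¹) atTop (𝓝 1) := by
    simpa [one_div, Function.comp_def] using tendsto_rpow_div.comp tendsto_natCast_atTop_atTop
  have hprod := hconst.mul (hroot.pow k)
  rw [one_pow, mul_one] at hprod
  refine hprod.congr fun n => ?_
  rw [Real.mul_rpow hb.le (by positivity), ← Real.rpow_mul_natCast (by positivity),
    ← Real.rpow_natCast_mul (by positivity), mul_comm (k : ℝ)]

theorem tendsto_rpow_inv_of_isBigO {f : ℕ → ℝ} {r : ℝ} {k k' : ℕ} (hr : 0 < r)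
    (hf : ∀ n, 0 ≤ f n) (hupper : f =O[atTop] fun n => (n : ℝ) ^ k * r ^ n)
    (hlower : (fun n : ℕ => r ^ n) =O[atTop] fun n => (n : ℝ) ^ k' * f n) :
    Tendsto (fun n => f n ^ (n : ℝ)⁻¹) atTop (𝓝 r) := by
  obtain ⟨b, hb, hbB⟩ := hupper.exists_pos
  obtain ⟨a, ha, haB⟩ := hlower.exists_pos
  have hup := (tendsto_mul_natCast_pow_rpow_inv hb k).mul_const r
  have hlow := tendsto_const_nhds (x := r).div (tendsto_mul_natCast_pow_rpow_inv ha k')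
    one_ne_zero
  rw [one_mul] at hup
  rw [div_one] at hlow
  refine tendsto_of_tendsto_of_tendsto_of_le_of_le' hlow hup ?_ ?_
  · filter_upwards [haB.bound, eventually_ne_atTop 0] with n hn hn0
    rw [Real.norm_of_nonneg (by positivity),
      Real.norm_of_nonneg (mul_nonneg (by positivity) (hf n))] at hn
    rw [Pi.div_apply, div_le_iff₀ (by positivity)]
    calc r = (r ^ n) ^ (n : ℝ)⁻¹ := (Real.pow_rpow_inv_natCast hr.le hn0).symm
      _ ≤ (a * (n : ℝ) ^ k' * f n) ^ (n : ℝ)⁻¹ := by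
        gcongr
        linarith
      _ = f n ^ (n : ℝ)⁻¹ * (a * (n : ℝ) ^ k') ^ (n : ℝ)⁻¹ := by
        rw [Real.mul_rpow (by positivity) (hf n), mul_comm]
  · filter_upwards [hbB.bound, eventually_ne_atTop 0] with n hn hn0
    rw [Real.norm_of_nonneg (hf n), Real.norm_of_nonneg (by positivity)] at hn
    calc f n ^ (n : ℝ)⁻¹ ≤ (b * (n : ℝ) ^ k * r ^ n) ^ (n : ℝ)⁻¹ := by
          gcongr
          · exact hf n
          · linarith
      _ = (b * (n : ℝ) ^ k) ^ (n : ℝ)⁻¹ * r := by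
        rw [Real.mul_rpow (by positivity) (by positivity), Real.pow_rpow_inv_natCast hr.le hn0]

section JordanSequence

variable {ι 𝕜 : Type*} [Fintype ι] [DecidableEq ι] [NormedField 𝕜] {Λ : Matrix ι ι 𝕜}

theorem exists_tendsto_inv_pow_mulVec [CompleteSpace 𝕜] (hΛ : IsUnit Λ)
    (hsum : Summable fun n => ‖Λ⁻¹ ^ n‖) {c e : ℕ → ι → 𝕜} {C : ℝ}
    (hrec : ∀ n, c (n + 1) = Λ *ᵥ c n + e n) (he : ∀ n, ‖e n‖ ≤ C) :
    ∃ v, Tendsto (fun n => (Λ⁻¹ ^ n) *ᵥ c n) atTop (𝓝 v) := by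
  have hstep : ∀ n, (Λ⁻¹ ^ (n + 1)) *ᵥ c (n + 1) - (Λ⁻¹ ^ n) *ᵥ c n =
      (Λ⁻¹ ^ (n + 1)) *ᵥ e n := fun n => by
    rw [hrec, mulVec_add, mulVec_mulVec, pow_succ, mul_assoc,
      nonsing_inv_mul _ (isUnit_iff_isUnit_det Λ |>.mp hΛ), mul_one, add_sub_cancel_left]
  have hdist : Summable fun n => dist ((Λ⁻¹ ^ n) *ᵥ c n) ((Λ⁻¹ ^ (n + 1)) *ᵥ c (n + 1)) := by
    refine .of_nonneg_of_le (fun _ => dist_nonneg) (fun n => ?_)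
      (((summable_nat_add_iff 1).mpr hsum).mul_right C)
    rw [dist_comm, dist_eq_norm, hstep]
    exact (linfty_opNorm_mulVec _ _).trans (mul_le_mul_of_nonneg_left (he n) (norm_nonneg _))
  exact cauchySeq_tendsto_of_complete (cauchySeq_of_summable_dist hdist)

theorem tendsto_norm_rpow_inv_of_tendsto_inv_pow_mulVec (hΛ : IsUnit Λ) {r : ℝ} (hr : 0 < r)
    {k k' : ℕ} (hpow : (fun n : ℕ => Λ ^ n) =O[atTop] fun n => (n : ℝ) ^ k * r ^ n)
    (hpow_inv : (fun n : ℕ => Λ⁻¹ ^ n) =O[atTop] fun n => (n : ℝ) ^ k' * r⁻¹ ^ n)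
    {c : ℕ → ι → 𝕜} {v : ι → 𝕜} (hv : Tendsto (fun n => (Λ⁻¹ ^ n) *ᵥ c n) atTop (𝓝 v))
    (hv0 : v ≠ 0) :
    Tendsto (fun n => ‖c n‖ ^ (n : ℝ)⁻¹) atTop (𝓝 r) := by
  set x := fun n => (Λ⁻¹ ^ n) *ᵥ c n
  have hcx : ∀ n, c n = (Λ ^ n) *ᵥ x n := fun n => by
    rw [mulVec_mulVec, inv_pow', mul_nonsing_inv _ (isUnit_iff_isUnit_det _ |>.mp (hΛ.pow n)),
      one_mulVec]
  have hupper : (fun n => ‖c n‖) =O[atTop] fun n => (n : ℝ) ^ k * r ^ n := by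
    have hc : (fun n => ‖c n‖) =O[atTop] fun n => ‖Λ ^ n‖ * ‖x n‖ :=
      IsBigO.of_bound 1 (.of_forall fun n => by
        rw [one_mul, norm_mul, norm_norm, norm_norm, norm_norm, hcx n]
        exact linfty_opNorm_mulVec _ _)
    simpa using hc.trans (hpow.norm_left.mul (hv.norm.isBigO_one ℝ))
  have hlower : (fun n : ℕ => r ^ n) =O[atTop] fun n => (n : ℝ) ^ k' * ‖c n‖ := by
    have hx : x =O[atTop] fun n => ‖Λ⁻¹ ^ n‖ * ‖c n‖ :=
      IsBigO.of_bound 1 (.of_forall fun n => by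
        rw [one_mul, norm_mul, norm_norm, norm_norm]
        exact linfty_opNorm_mulVec _ _)
    have hx_ge : (fun _ => (1 : ℝ)) =O[atTop] x :=
      (isBigO_const_left_iff_pos_le_norm one_ne_zero).mpr ⟨‖v‖ / 2, by positivity,
        hv.norm.eventually (eventually_ge_nhds (half_lt_self (norm_pos_iff.mpr hv0)))⟩
    have hone : (fun _ => (1 : ℝ)) =O[atTop] fun n : ℕ => (n : ℝ) ^ k' * r⁻¹ ^ n * ‖c n‖ :=
      (hx_ge.trans hx).trans (hpow_inv.norm_left.mul (isBigO_refl _ _))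
    refine ((isBigO_refl (fun n : ℕ => r ^ n) atTop).mul hone).congr (fun n => mul_one _)
      fun n => ?_
    rw [inv_pow]
    field_simp
  exact tendsto_rpow_inv_of_isBigO hr (fun n => norm_nonneg _) hupper hlower

end JordanSequence

/-- For an expanding Jordan block, an almost-invariant sequence has a canonical limit
`v = lim Λ⁻ⁿ cₙ`, and if this limit is nonzero (and `c₀ ≠ 0`), then `‖cₙ‖^{1/n} → |λ|`. -/
theorem expanding_jordan_growth (l : ℕ) (lam : ℂ) (hlam : 1 < ‖lam‖)
    (c e : ℕ → Fin (l + 1) → ℂ) (C : ℝ)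
    (hrec : ∀ n : ℕ, c (n + 1) = (jordanBlock l lam).mulVec (c n) + e n)
    (he : ∀ n : ℕ, ‖e n‖ ≤ C) :
    (∃ v : Fin (l + 1) → ℂ,
      Filter.Tendsto (fun n : ℕ => ((jordanBlock l lam)⁻¹ ^ n).mulVec (c n))
        Filter.atTop (nhds v)) ∧
    ∀ v : Fin (l + 1) → ℂ,
      Filter.Tendsto (fun n : ℕ => ((jordanBlock l lam)⁻¹ ^ n).mulVec (c n))
        Filter.atTop (nhds v) →
      c 0 ≠ 0 → v ≠ 0 →
      Filter.Tendsto (fun n : ℕ => ‖c n‖ ^ ((n : ℝ)⁻¹)) Filter.atTop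
        (nhds ‖lam‖) := by
  have hlam0 : lam ≠ 0 := norm_pos_iff.mp (one_pos.trans hlam)
  have hnil : IsNilpotent (jordanBlock l lam - algebraMap ℂ _ lam) := by
    rw [jordanBlock_eq_algebraMap_add, add_sub_cancel_left]
    exact isNilpotent_jordanBlock_zero l
  have hΛ := isUnit_of_isNilpotent_sub_algebraMap hlam0 hnil
  have hnil_inv : IsNilpotent ((jordanBlock l lam)⁻¹ - algebraMap ℂ _ lam⁻¹) := by
    simpa [coe_units_inv] using isNilpotent_inv_sub_algebraMap (u := hΛ.unit) hlam0 hnil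
  obtain ⟨k, hpow⟩ := isBigO_pow_of_isNilpotent_sub_algebraMap hlam0 hnil
  obtain ⟨k', hpow_inv⟩ := isBigO_pow_of_isNilpotent_sub_algebraMap (inv_ne_zero hlam0) hnil_inv
  rw [norm_inv] at hpow_inv
  have hsum : Summable fun n => ‖(jordanBlock l lam)⁻¹ ^ n‖ :=
    summable_of_isBigO_nat (summable_pow_mul_geometric_of_norm_lt_one k'
      (by rwa [norm_inv, norm_norm, inv_lt_one₀ (one_pos.trans hlam)])) hpow_inv.norm_left
  exact ⟨exists_tendsto_inv_pow_mulVec hΛ hsum hrec he, fun v hv _ hv0 =>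
    tendsto_norm_rpow_inv_of_tendsto_inv_pow_mulVec hΛ (one_pos.trans hlam) hpow hpow_inv hv hv0⟩
end
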